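/- Let S be a semigroup in which every element is a product of idempotents, and let e, f be idempotents of S with e 𝓓 f. Then there exist m ≥ 0 and idempotents e = g_0, g_1, …, g_m = f of S, each 𝓓-related to e, such that for every 0 ≤ i < m either g_i 𝓡 g_{i+1} or g_i 𝓛 g_{i+1}. (This expresses the connectivity of the Graham–Houghton graph of any regular 𝓓-class of an idempotent-generated semigroup, Proposition 2.4.) -/
import Mathlib


/-!
Proposition 2.4: in an idempotent-generated semigroup, any two 𝓓-related idempotents are
connected by a chain of idempotents in the same 𝓓-class in which consecutive elements are
𝓡- or 𝓛-related (connectivity of the Graham–Houghton graph of a regular 𝓓-class).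
-/

namespace Stmt1

variable {S : Type*} [Semigroup S]

/-- Green's `≤𝓡` preorder: `a ≤𝓡 b` iff `a = b` or `a = b * x` for some `x`. -/
def leR (a b : S) : Prop := a = b ∨ ∃ x, a = b * x

/-- Green's `≤𝓛` preorder: `a ≤𝓛 b` iff `a = b` or `a = x * b` for some `x`. -/
def leL (a b : S) : Prop := a = b ∨ ∃ x, a = x * b

/-- Green's `𝓡` relation. -/
def greenR (a b : S) : Prop := leR a b ∧ leR b a

/-- Green's `𝓛` relation. -/
def greenL (a b : S) : Prop := leL a b ∧ leL b a

/-- Green's `𝓓` relation. -/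
def greenD (a b : S) : Prop := ∃ c, greenR a c ∧ greenL c b

/-- The product `u 0 * u 1 * ⋯ * u k`. -/
def prodFrom (u : ℕ → S) : ℕ → S
  | 0 => u 0
  | k + 1 => prodFrom u k * u (k + 1)

section Aux

variable {T : Type*} [Monoid T]

/-- Monoid version of `≤𝓡`. -/
def mLeR (a b : T) : Prop := ∃ x, a = b * x

/-- Monoid version of `≤𝓛`. -/
def mLeL (a b : T) : Prop := ∃ x, a = x * b

/-- Monoid version of `𝓡`. -/
def mR (a b : T) : Prop := mLeR a b ∧ mLeR b a

/-- Monoid version of `𝓛`. -/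
def mL (a b : T) : Prop := mLeL a b ∧ mLeL b a

/-- Prefix products: `pref U n = U 0 * ⋯ * U (n-1)`. -/
def pref (U : ℕ → T) : ℕ → T
  | 0 => 1
  | n + 1 => pref U n * U n

/-- Auxiliary for suffix products. -/
def suffAux (U : ℕ → T) (k : ℕ) : ℕ → T
  | 0 => 1
  | n + 1 => U (k - n) * suffAux U k n

/-- Suffix products: `suff U k i = U i * ⋯ * U k`. -/
def suff (U : ℕ → T) (k i : ℕ) : T := suffAux U k (k + 1 - i)

lemma suff_last (U : ℕ → T) (k : ℕ) : suff U k (k + 1) = 1 := by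
  simp [suff, suffAux]

lemma suff_step (U : ℕ → T) (k : ℕ) {i : ℕ} (h : i ≤ k) :
    suff U k i = U i * suff U k (i + 1) := by
  have h1 : k + 1 - i = (k - i) + 1 := by omega
  have h2 : k - (k - i) = i := by omega
  have h3 : k + 1 - (i + 1) = k - i := by omega
  rw [suff, h1, suffAux, h2, suff, h3]

lemma pref_suff (U : ℕ → T) (k : ℕ) (hU : ∀ i ≤ k, U i * U i = U i) :
    ∀ d i, i + d = k + 1 → pref U i * suff U k i = pref U (k + 1) := by
  intro d
  induction d with
  | zero =>
      intro i hi
      have : i = k + 1 := by omega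
      subst this
      rw [suff_last, mul_one]
  | succ n ih =>
      intro i hi
      have hik : i ≤ k := by omega
      rw [suff_step U k hik, ← mul_assoc]
      exact ih (i + 1) (by omega)

theorem core (e f A a' : T) (U : ℕ → T) (k : ℕ)
    (hU : ∀ i ≤ k, U i * U i = U i)
    (hA : pref U (k + 1) = A)
    (hAa' : A * a' = e)
    (ha'Aa' : a' * A * a' = a')
    (ha'e : a' * e = a')
    (ha'A : a' * A = f) :
    ∃ G : ℕ → T, G 0 = e ∧ G (2 * k + 2) = f ∧
      (∀ j ≤ 2 * k + 2, G j * G j = G j ∧ (∃ x y, G j = x * a' * y) ∧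
        ∃ d, mR (G j) d ∧ mL d e) ∧
      ∀ j < 2 * k + 2, mR (G j) (G (j + 1)) ∨ mL (G j) (G (j + 1)) := by
  -- products of prefixes and suffixes
  have PQ : ∀ i ≤ k + 1, pref U i * suff U k i = A := by
    intro i hi
    rw [pref_suff U k hU (k + 1 - i) i (by omega), hA]
  have PQ' : ∀ i ≤ k, pref U (i + 1) * suff U k i = A := by
    intro i hi
    have : pref U (i + 1) * suff U k i
        = pref U i * (U i * U i) * suff U k (i + 1) := by
      rw [suff_step U k hi, pref]
      simp [mul_assoc]
    rw [this, hU i hi]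
    exact PQ (i + 1) (by omega)
  -- the key algebraic identity
  have key : ∀ P Q P' Q' : T, P * Q = A →
      (Q' * a' * P) * (Q * a' * P') = Q' * a' * P' := by
    intro P Q P' Q' h
    have h2 : a' * (P * (Q * (a' * P'))) = a' * P' := by
      rw [show P * (Q * (a' * P')) = (P * Q) * (a' * P') by simp [mul_assoc], h,
        show a' * (A * (a' * P')) = (a' * A * a') * P' by simp [mul_assoc], ha'Aa']
    calc (Q' * a' * P) * (Q * a' * P')
        = Q' * (a' * (P * (Q * (a' * P')))) := by simp [mul_assoc]
      _ = Q' * (a' * P') := by rw [h2]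
      _ = Q' * a' * P' := by rw [mul_assoc]
  -- the chain elements
  set E : ℕ → T := fun i => suff U k i * a' * pref U i with hE
  set H : ℕ → T := fun i => suff U k i * a' * pref U (i + 1) with hH
  have hE0 : E 0 = e := by
    have h0 : suff U k 0 = A := by
      have := PQ 0 (by omega)
      rwa [pref, one_mul] at this
    simp only [hE, h0, pref, mul_one, hAa']
  have hElast : E (k + 1) = f := by
    simp only [hE, suff_last, one_mul, hA, ha'A]
  have hEidem : ∀ i ≤ k + 1, E i * E i = E i :=
    fun i hi => key _ _ _ _ (PQ i hi)
  have hHidem : ∀ i ≤ k, H i * H i = H i :=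
    fun i hi => key _ _ _ _ (PQ' i hi)
  have hEH : ∀ i ≤ k, mR (E i) (H i) := by
    intro i hi
    constructor
    · exact ⟨E i, (key (pref U (i + 1)) (suff U k i) (pref U i) (suff U k i) (PQ' i hi)).symm⟩
    · exact ⟨U i, by simp only [hE, hH, pref, mul_assoc]⟩
  have hHE : ∀ i ≤ k, mL (H i) (E (i + 1)) := by
    intro i hi
    constructor
    · refine ⟨U i, ?_⟩
      simp only [hE, hH, suff_step U k hi, mul_assoc]
    · exact ⟨E (i + 1), (key (pref U (i + 1)) (suff U k i) (pref U (i + 1)) (suff U k (i + 1))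
        (PQ' i hi)).symm⟩
  -- 𝓓-relatedness to e, via the witness d = suff i * a'
  have hdLe : ∀ i ≤ k + 1, mL (suff U k i * a') e := by
    intro i hi
    constructor
    · exact ⟨suff U k i * a', by rw [mul_assoc, ha'e]⟩
    · exact ⟨pref U i, by rw [← mul_assoc, PQ i hi, hAa']⟩
  have hEd : ∀ i ≤ k + 1, mR (E i) (suff U k i * a') := by
    intro i hi
    constructor
    · exact ⟨pref U i, by simp only [hE, mul_assoc]⟩
    · refine ⟨suff U k i * a', ?_⟩
      have := key (pref U i) (suff U k i) 1 (suff U k i) (PQ i hi)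
      rw [mul_one] at this
      exact this.symm
  have hHd : ∀ i ≤ k, mR (H i) (suff U k i * a') := by
    intro i hi
    constructor
    · exact ⟨pref U (i + 1), by simp only [hH, mul_assoc]⟩
    · refine ⟨suff U k i * a', ?_⟩
      have := key (pref U (i + 1)) (suff U k i) 1 (suff U k i) (PQ' i hi)
      rw [mul_one] at this
      exact this.symm
  -- assemble the chain
  refine ⟨fun j => if j % 2 = 0 then E (j / 2) else H (j / 2), ?_, ?_, ?_, ?_⟩
  · simpa using hE0
  · have h1 : (2 * k + 2) % 2 = 0 := by omega
    have h2 : (2 * k + 2) / 2 = k + 1 := by omega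
    simp only [h1, if_pos, h2]
    exact hElast
  · intro j hj
    by_cases hpar : j % 2 = 0
    · have hj2 : j / 2 ≤ k + 1 := by omega
      simp only [hpar, if_pos]
      exact ⟨hEidem _ hj2, ⟨suff U k (j / 2), pref U (j / 2), rfl⟩,
        suff U k (j / 2) * a', hEd _ hj2, hdLe _ hj2⟩
    · have hj2 : j / 2 ≤ k := by omega
      simp only [hpar, if_neg, ite_false]
      exact ⟨hHidem _ hj2, ⟨suff U k (j / 2), pref U (j / 2 + 1), rfl⟩,
        suff U k (j / 2) * a', hHd _ hj2, hdLe _ (by omega)⟩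
  · intro j hj
    by_cases hpar : j % 2 = 0
    · have h1 : (j + 1) % 2 ≠ 0 := by omega
      have h2 : (j + 1) / 2 = j / 2 := by omega
      have hj2 : j / 2 ≤ k := by omega
      simp only [hpar, if_pos, h1, if_neg, ite_false, h2]
      exact Or.inl (hEH _ hj2)
    · have h1 : (j + 1) % 2 = 0 := by omega
      have h2 : (j + 1) / 2 = j / 2 + 1 := by omega
      have hj2 : j / 2 ≤ k := by omega
      simp only [hpar, if_neg, ite_false, h1, if_pos, h2]
      exact Or.inr (hHE _ hj2)

end Aux

section Transfer

lemma wone_mul_eq_one {x y : WithOne S} (h : x * y = 1) : x = 1 ∧ y = 1 := by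
  rcases eq_or_ne x 1 with rfl | hx
  · rw [one_mul] at h; exact ⟨rfl, h⟩
  rcases eq_or_ne y 1 with rfl | hy
  · rw [mul_one] at h; exact ⟨h, rfl⟩
  obtain ⟨a, rfl⟩ := WithOne.ne_one_iff_exists.mp hx
  obtain ⟨b, rfl⟩ := WithOne.ne_one_iff_exists.mp hy
  rw [← WithOne.coe_mul] at h
  exact absurd h WithOne.coe_ne_one

lemma leR_iff {a b : S} : leR a b ↔ mLeR (a : WithOne S) (b : WithOne S) := by
  constructor
  · rintro (rfl | ⟨x, rfl⟩)
    · exact ⟨1, (mul_one _).symm⟩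
    · exact ⟨x, WithOne.coe_mul b x⟩
  · rintro ⟨x, hx⟩
    rcases eq_or_ne x 1 with rfl | hx1
    · rw [mul_one, WithOne.coe_inj] at hx
      exact Or.inl hx
    · obtain ⟨t, rfl⟩ := WithOne.ne_one_iff_exists.mp hx1
      rw [← WithOne.coe_mul, WithOne.coe_inj] at hx
      exact Or.inr ⟨t, hx⟩

lemma leL_iff {a b : S} : leL a b ↔ mLeL (a : WithOne S) (b : WithOne S) := by
  constructor
  · rintro (rfl | ⟨x, rfl⟩)
    · exact ⟨1, (one_mul _).symm⟩
    · exact ⟨x, WithOne.coe_mul x b⟩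
  · rintro ⟨x, hx⟩
    rcases eq_or_ne x 1 with rfl | hx1
    · rw [one_mul, WithOne.coe_inj] at hx
      exact Or.inl hx
    · obtain ⟨t, rfl⟩ := WithOne.ne_one_iff_exists.mp hx1
      rw [← WithOne.coe_mul, WithOne.coe_inj] at hx
      exact Or.inr ⟨t, hx⟩

lemma greenR_iff {a b : S} : greenR a b ↔ mR (a : WithOne S) (b : WithOne S) :=
  and_congr leR_iff leR_iff

lemma greenL_iff {a b : S} : greenL a b ↔ mL (a : WithOne S) (b : WithOne S) :=
  and_congr leL_iff leL_iff

lemma greenD_of_witness {a b : S} {d : WithOne S}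
    (h1 : mR (a : WithOne S) d) (h2 : mL d (b : WithOne S)) : greenD a b := by
  have hd1 : d ≠ 1 := by
    rintro rfl
    obtain ⟨x, hx⟩ := h1.2
    exact WithOne.coe_ne_one ((wone_mul_eq_one hx.symm).1)
  obtain ⟨c, rfl⟩ := WithOne.ne_one_iff_exists.mp hd1
  exact ⟨c, greenR_iff.mpr h1, greenL_iff.mpr h2⟩

lemma pref_coe (u : ℕ → S) :
    ∀ n, pref (fun i => (u i : WithOne S)) (n + 1) = ((prodFrom u n : S) : WithOne S) := by
  intro n
  induction n with
  | zero => simp [pref, prodFrom]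
  | succ n ih => rw [pref, ih, prodFrom, WithOne.coe_mul]

end Transfer

theorem graham_houghton_connected
    (hgen : ∀ a : S, ∃ (k : ℕ) (u : ℕ → S), (∀ i ≤ k, u i * u i = u i) ∧ a = prodFrom u k)
    (e f : S) (he : e * e = e) (hf : f * f = f) (hef : greenD e f) :
    ∃ (m : ℕ) (g : ℕ → S),
      g 0 = e ∧ g m = f ∧
      (∀ i ≤ m, g i * g i = g i ∧ greenD (g i) e) ∧
      ∀ i < m, greenR (g i) (g (i + 1)) ∨ greenL (g i) (g (i + 1)) := by
  obtain ⟨c, ⟨h1, h2⟩, h3, h4⟩ := hef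
  -- basic facts about the connecting element c
  have hec : e * c = c := by
    rcases h2 with rfl | ⟨x, rfl⟩
    · exact he
    · rw [← mul_assoc, he]
  have hcf : c * f = c := by
    rcases h3 with rfl | ⟨x, rfl⟩
    · exact hf
    · rw [mul_assoc, hf]
  have hy : ∃ y, e = c * y := by
    rcases h1 with rfl | ⟨x, hx⟩
    · exact ⟨e, by rw [he]⟩
    · exact ⟨x, hx⟩
  have hz : ∃ z, f = z * c := by
    rcases h4 with rfl | ⟨x, hx⟩
    · exact ⟨f, by rw [hf]⟩
    · exact ⟨x, hx⟩
  obtain ⟨y, hy⟩ := hy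
  obtain ⟨z, hz⟩ := hz
  -- the "inverse" a' of c
  have hca' : c * (f * y * e) = e := by
    rw [← mul_assoc, ← mul_assoc, hcf, ← hy, he]
  have ha'c : f * y * e * c = f := by
    have hcyc : c * (y * c) = c := by rw [← mul_assoc, ← hy, hec]
    simp only [mul_assoc]
    rw [hec, hz, mul_assoc, hcyc]
  have hfa' : f * (f * y * e) = f * y * e := by
    rw [← mul_assoc, ← mul_assoc, hf]
  have ha'e : f * y * e * e = f * y * e := by
    rw [mul_assoc, he]
  -- decompose c into idempotents
  obtain ⟨k, u, hu, hcu⟩ := hgen c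
  -- pass to the monoid `WithOne S` and apply `core`
  obtain ⟨G, hG0, hGm, hGall, hGstep⟩ :=
    core (T := WithOne S) (e : WithOne S) (f : WithOne S) (c : WithOne S)
      ((f * y * e : S) : WithOne S) (fun i => (u i : WithOne S)) k
      (fun i hi => by rw [← WithOne.coe_mul, hu i hi])
      (by rw [pref_coe u k, ← hcu])
      (by rw [← WithOne.coe_mul, hca'])
      (by rw [← WithOne.coe_mul, ← WithOne.coe_mul, ha'c, hfa'])
      (by rw [← WithOne.coe_mul, ha'e])
      (by rw [← WithOne.coe_mul, ha'c])
  -- pull the chain back down to S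
  have hex : ∀ j : ℕ, ∃ s : S, (if j ≤ 2 * k + 2 then G j else (e : WithOne S)) = ↑s := by
    intro j
    by_cases hj : j ≤ 2 * k + 2
    · obtain ⟨-, ⟨x, w, hxw⟩, -⟩ := hGall j hj
      have hne : G j ≠ 1 := by
        rw [hxw]
        intro h
        exact WithOne.coe_ne_one (wone_mul_eq_one (wone_mul_eq_one h).1).2
      obtain ⟨s, hs⟩ := WithOne.ne_one_iff_exists.mp hne
      exact ⟨s, by rw [if_pos hj, ← hs]⟩
    · exact ⟨e, by rw [if_neg hj]⟩
  choose g hg using hex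
  have hgc : ∀ j ≤ 2 * k + 2, (g j : WithOne S) = G j := by
    intro j hj
    have := hg j
    rw [if_pos hj] at this
    exact this.symm
  refine ⟨2 * k + 2, g, ?_, ?_, ?_, ?_⟩
  · have h := hgc 0 (by omega)
    rw [hG0] at h
    exact WithOne.coe_inj.mp h
  · have h := hgc (2 * k + 2) (by omega)
    rw [hGm] at h
    exact WithOne.coe_inj.mp h
  · intro i hi
    obtain ⟨hid, -, d, hd1, hd2⟩ := hGall i hi
    rw [← hgc i hi] at hd1
    constructor
    · apply WithOne.coe_inj.mp
      rw [WithOne.coe_mul, hgc i hi, hid]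
    · exact greenD_of_witness hd1 hd2
  · intro i hi
    have h1 := hgc i (by omega)
    have h2 := hgc (i + 1) (by omega)
    rcases hGstep i hi with h | h
    · exact Or.inl (greenR_iff.mpr (by rw [h1, h2]; exact h))
    · exact Or.inr (greenL_iff.mpr (by rw [h1, h2]; exact h))

end Stmt1
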